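/- arXiv:2509.22575 — 3 statements merged into one kernel-verified Lean document; each statement's English description precedes it below -/
import Mathlib

section
/- Let α and ι be types and ν : α → ι a function. The stabilizer of ν under the action of the symmetric group Perm(α) given by σ • ν = ν ∘ σ⁻¹ (equivalently, the subgroup {σ ∈ Perm(α) | ν ∘ σ = ν}) is isomorphic as a group to the product ∏_{i ∈ ι} Perm({x ∈ α | ν(x) = i}) of the symmetric groups of the fibers of ν. -/
/-- The stabilizer of `ν : α → ι` under the action `σ • ν = ν ∘ σ⁻¹` of
`Equiv.Perm α`, described equivalently as the subgroup `{σ | ν ∘ σ = ν}`. -/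
def fiberwisePermSubgroup {α ι : Type*} (ν : α → ι) : Subgroup (Equiv.Perm α) where
  carrier := {σ : Equiv.Perm α | ν ∘ σ = ν}
  one_mem' := rfl
  mul_mem' := by
    intro a b ha hb
    funext x
    show ν ((a * b) x) = ν x
    rw [Equiv.Perm.mul_apply]
    exact (congrFun ha (b x)).trans (congrFun hb x)
  inv_mem' := by
    intro a ha
    funext x
    show ν (a⁻¹ x) = ν x
    conv_rhs => rw [← Equiv.apply_symm_apply a x]
    exact (congrFun ha (a⁻¹ x)).symm

/-- `DomMulAct.mk` reverses multiplication, so it identifies `fiberwisePermSubgroup ν` with the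
opposite of the stabilizer of `ν` for the domain action `DomMulAct.mk σ • ν = ν ∘ σ`. -/
def fiberwisePermSubgroupMulEquivStabilizer {α ι : Type*} (ν : α → ι) :
    fiberwisePermSubgroup ν ≃* (MulAction.stabilizer (Equiv.Perm α)ᵈᵐᵃ ν)ᵐᵒᵖ where
  toFun σ := .op ⟨DomMulAct.mk σ, DomMulAct.mem_stabilizer_iff.mpr σ.2⟩
  invFun g := ⟨DomMulAct.mk.symm g.unop, DomMulAct.mem_stabilizer_iff.mp g.unop.2⟩
  left_inv _ := rfl
  right_inv _ := rfl
  map_mul' _ _ := rfl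

/-- The stabilizer of `ν : α → ι` in the symmetric group of `α` is isomorphic,
as a group, to the product of the symmetric groups of the fibers of `ν`. -/
theorem fiberwisePermSubgroup_mulEquiv_pi_perm {α ι : Type*} (ν : α → ι) :
    Nonempty (fiberwisePermSubgroup ν ≃* ∀ i : ι, Equiv.Perm {x : α // ν x = i}) :=
  ⟨(fiberwisePermSubgroupMulEquivStabilizer ν).trans (DomMulAct.stabilizerMulEquiv ν)⟩
end

section
/- Let G be a simple graph on a vertex type V and let H₁, H₂ be subgraphs of G such that the coercion of each Hᵢ to a simple graph on its vertex set is a tree (connected and acyclic), and such that H₁.verts ∩ H₂.verts = {v} for a single vertex v. Then the coercion of the union subgraph H₁ ⊔ H₂ to a simple graph on H₁.verts ∪ H₂.verts is a tree. -/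
/-!
The union is connected because the two trees share `v`. For acyclicity, pass to the spanning
graphs on `V`, whose supports meet in at most one vertex `z`. A cycle not contained in either
graph visits a vertex `b₀` touching only the second graph and a vertex `b₁` touching only the
first; each of the two arcs of the cycle between `b₀` and `b₁` enters the support of the other
graph, which is only possible through `z`, so the cycle passes through `z` twice.
-/

namespace SimpleGraph

variable {V : Type*}

lemma IsAcyclic.of_induce {G : SimpleGraph V} {s : Set V} (hs : G.support ⊆ s)
    (h : (G.induce s).IsAcyclic) : G.IsAcyclic := by
  intro u c hc
  have hcs : ∀ x ∈ c.support, x ∈ s := fun x hx ↦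
    hs (mem_support_of_mem_walk_support c hc.not_nil hx)
  refine h (c.induce s hcs) ?_
  rw [← Walk.isCycle_map_iff_of_injective (f := (Embedding.induce s).toHom)
    Subtype.val_injective, Walk.map_induce]
  exact hc

lemma Subgraph.isAcyclic_spanningCoe_iff {G : SimpleGraph V} {H : G.Subgraph} :
    H.spanningCoe.IsAcyclic ↔ H.coe.IsAcyclic :=
  ⟨fun h ↦ h.embedding H.coeEmbeddingSpanningCoe,
    IsAcyclic.of_induce (G := H.spanningCoe) (s := H.verts) fun _ ⟨_, hab⟩ ↦ hab.fst_mem⟩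

namespace Walk

variable {G G₁ G₂ : SimpleGraph V}

lemma exists_mem_support_sdiff_support (hG : G ≤ G₁ ⊔ G₂)
    (hs : (G₁.support ∩ G₂.support).Subsingleton) {x y : V} (p : G.Walk x y)
    (hp : ¬ ∀ e ∈ p.edges, e ∈ G₁.edgeSet) : ∃ b ∈ p.support, b ∈ G₂.support \ G₁.support := by
  obtain ⟨e, he, he₁⟩ := not_forall₂.mp hp
  induction e using Sym2.ind with | _ a b => ?_
  have hab : G₂.Adj a b := (hG (p.adj_of_mem_edges he)).resolve_left he₁
  by_cases ha : a ∈ G₁.support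
  · refine ⟨b, p.snd_mem_support_of_mem_edges he, hab.mem_support_right, fun hb ↦ hab.ne ?_⟩
    exact hs ⟨ha, hab.mem_support_left⟩ ⟨hb, hab.mem_support_right⟩
  · exact ⟨a, p.fst_mem_support_of_mem_edges he, hab.mem_support_left, ha⟩

lemma exists_mem_tail_support_inter_support (hG : G ≤ G₁ ⊔ G₂) {x y : V} (p : G.Walk x y)
    (hx : x ∉ G₁.support) (hy : y ∈ G₁.support) :
    ∃ z ∈ p.support.tail, z ∈ G₁.support ∩ G₂.support := by
  obtain ⟨d, hd, hfst, hsnd⟩ := p.exists_boundary_dart G₁.supportᶜ hx (not_not.mpr hy)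
  have hadj : G₂.Adj d.fst d.snd := (hG d.adj).resolve_left fun h ↦ hfst h.mem_support_left
  exact ⟨d.snd, p.map_snd_darts ▸ List.mem_map_of_mem hd, not_not.mp hsnd, hadj.mem_support_right⟩

end Walk

theorem IsAcyclic.sup_of_subsingleton_support_inter {G₁ G₂ : SimpleGraph V}
    (h₁ : G₁.IsAcyclic) (h₂ : G₂.IsAcyclic) (hs : (G₁.support ∩ G₂.support).Subsingleton) :
    (G₁ ⊔ G₂).IsAcyclic := by
  classical
  intro u c hc
  by_cases hc₁ : ∀ e ∈ c.edges, e ∈ G₁.edgeSet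
  · exact h₁ _ (hc.transfer hc₁)
  by_cases hc₂ : ∀ e ∈ c.edges, e ∈ G₂.edgeSet
  · exact h₂ _ (hc.transfer hc₂)
  have hs' : (G₂.support ∩ G₁.support).Subsingleton := Set.inter_comm G₁.support _ ▸ hs
  obtain ⟨b₀, hb₀c, hb₀₂, hb₀₁⟩ := c.exists_mem_support_sdiff_support le_rfl hs hc₁
  obtain ⟨b₁, hb₁c, hb₁₁, hb₁₂⟩ :=
    c.exists_mem_support_sdiff_support (sup_comm G₁ G₂).le hs' hc₂
  set c' := c.rotate b₀ hb₀c
  have hb₁c' : b₁ ∈ c'.support := (c.mem_support_rotate_iff b₀ hb₀c).mpr hb₁c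
  obtain ⟨z₁, hz₁, hz₁s⟩ :=
    (c'.takeUntil b₁ hb₁c').exists_mem_tail_support_inter_support le_rfl hb₀₁ hb₁₁
  obtain ⟨z₂, hz₂, hz₂s⟩ :=
    (c'.dropUntil b₁ hb₁c').exists_mem_tail_support_inter_support (sup_comm G₁ G₂).le hb₁₂ hb₀₂
  have hnodup : c'.support.tail.Nodup := (hc.rotate hb₀c).support_nodup
  rw [← c'.take_spec hb₁c', Walk.tail_support_append, List.nodup_append] at hnodup
  exact hnodup.2.2 z₁ hz₁ z₂ hz₂ (hs hz₁s ⟨hz₂s.2, hz₂s.1⟩)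

end SimpleGraph

open SimpleGraph

/-- Gluing two subgraphs that are trees along a single shared vertex yields a
tree. -/
theorem isTree_sup_of_inter_singleton {V : Type*} {G : SimpleGraph V}
    (H₁ H₂ : G.Subgraph) (h1 : H₁.coe.IsTree) (h2 : H₂.coe.IsTree) (v : V)
    (hinter : H₁.verts ∩ H₂.verts = {v}) :
    (H₁ ⊔ H₂).coe.IsTree := by
  have hv : v ∈ (H₁ ⊓ H₂).verts := hinter.ge rfl
  refine ⟨(Subgraph.connected_sup ⟨h1.connected.preconnected⟩ ⟨h2.connected.preconnected⟩
    ⟨v, hv⟩).coe, ?_⟩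
  rw [← Subgraph.isAcyclic_spanningCoe_iff, Subgraph.sup_spanningCoe]
  have hs : (H₁.spanningCoe.support ∩ H₂.spanningCoe.support).Subsingleton :=
    (hinter ▸ Set.subsingleton_singleton).anti
      (Set.inter_subset_inter H₁.support_subset_verts H₂.support_subset_verts)
  exact (Subgraph.isAcyclic_spanningCoe_iff.mpr h1.isAcyclic).sup_of_subsingleton_support_inter
    (Subgraph.isAcyclic_spanningCoe_iff.mpr h2.isAcyclic) hs
end

section
/- Let C be a symmetric monoidal category (braided with symmetry β), a an object, c : a ⊗ a ⟶ 𝟙 a morphism with c ∘ β_{a,a} = c, and u : 𝟙 ⟶ a ⊗ a a morphism with β_{a,a} ∘ u = u. If the triangle identity (c ⊗ id_a) ∘ α⁻¹ ∘ (id_a ⊗ u) = id_a holds (with α the associator and unitors suppressed), then the other triangle identity (id_a ⊗ c) ∘ α ∘ (u ⊗ id_a) = id_a also holds; hence (a, c) is a duality datum with unit u. -/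
open CategoryTheory MonoidalCategory

/-!
Conjugating the first triangle identity by the braiding (naturality of `β` moves `u` and `c`
past the third strand) turns it into the second triangle identity for the braided pairing
`(β ≫ c, u ≫ β)`; the braid words that appear agree because in a symmetric category `β ≫ β = 𝟙`.
For a symmetric counit and unit this braided pairing is `(c, u)` itself.
-/

namespace CategoryTheory.SymmetricCategory

open BraidedCategory

variable {C : Type*} [Category C] [MonoidalCategory C] [SymmetricCategory C]

theorem braiding_comp_associator_inv_comp_braiding (X Y Z : C) :
    (β_ (X ⊗ Y) Z).hom ≫ (α_ Z X Y).inv ≫ (β_ (Z ⊗ X) Y).hom =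
      (β_ X Y).hom ▷ Z ≫ (α_ Y X Z).hom ≫ Y ◁ (β_ X Z).hom := by
  rw [braiding_tensor_left_hom Z X Y, Iso.inv_hom_id_assoc, ← braiding_naturality_left_assoc,
    braiding_tensor_left_hom Y X Z]
  simp only [Category.assoc, Iso.hom_inv_id_assoc, ← comp_whiskerRight_assoc, symmetry,
    id_whiskerRight, Category.id_comp, Iso.inv_hom_id, Category.comp_id]

theorem leftZigzag_eq_rightZigzag_braiding {X Y : C} (c : X ⊗ Y ⟶ 𝟙_ C) (u : 𝟙_ C ⟶ Y ⊗ X) :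
    (ρ_ X).inv ≫ X ◁ u ≫ (α_ X Y X).inv ≫ c ▷ X ≫ (λ_ X).hom =
      (λ_ X).inv ≫ (u ≫ (β_ Y X).hom) ▷ X ≫ (α_ X Y X).hom ≫ X ◁ ((β_ Y X).hom ≫ c) ≫
        (ρ_ X).hom := by
  have hunit : (ρ_ X).inv ≫ X ◁ u = (λ_ X).inv ≫ u ▷ X ≫ (β_ (Y ⊗ X) X).hom := by
    rw [braiding_naturality_left, ← leftUnitor_inv_braiding_assoc]
  have hcounit : c ▷ X ≫ (λ_ X).hom = (β_ (X ⊗ Y) X).hom ≫ X ◁ c ≫ (ρ_ X).hom := by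
    rw [← braiding_naturality_left_assoc, braiding_rightUnitor]
  rw [reassoc_of% hunit, hcounit, reassoc_of% braiding_comp_associator_inv_comp_braiding]
  simp only [comp_whiskerRight, whiskerLeft_comp, Category.assoc]

end CategoryTheory.SymmetricCategory

/-- In a symmetric monoidal category, for a symmetric counit `c : a ⊗ a ⟶ 𝟙`
and a symmetric candidate unit `u : 𝟙 ⟶ a ⊗ a`, one triangle identity implies
the other, so that `(a, c)` is a duality datum with unit `u`. -/
theorem symmetric_selfduality_other_triangle {C : Type*} [Category C]
    [MonoidalCategory C] [SymmetricCategory C] (a : C)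
    (c : a ⊗ a ⟶ 𝟙_ C) (u : 𝟙_ C ⟶ a ⊗ a)
    (hc : (β_ a a).hom ≫ c = c) (hu : u ≫ (β_ a a).hom = u)
    (h1 : (ρ_ a).inv ≫ (a ◁ u) ≫ (α_ a a a).inv ≫ (c ▷ a) ≫ (λ_ a).hom = 𝟙 a) :
    (λ_ a).inv ≫ (u ▷ a) ≫ (α_ a a a).hom ≫ (a ◁ c) ≫ (ρ_ a).hom = 𝟙 a := by
  rwa [SymmetricCategory.leftZigzag_eq_rightZigzag_braiding, hu, hc] at h1
end
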